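/- Assume 2 ≤ m ≤ N−2. Let 0 denote the element with e_s = 0 for all s and e(X) = 0 for all X with X:m and n(X) > 2. Then F(0) has all components e′_s = 0, e′(X) = −ε/2 for X = {m, m+1} and for X = {0, 1}, and e′(X) = 0 for every other X; consequently ‖F(0)‖ = 4|ε|. -/

import Mathlib

open Finset
open scoped symmDiff

/-- `M = {1,…,m}` viewed inside `ℤ/Nℤ`. -/
def Mset (N m : ℕ) : Finset (ZMod N) := (Finset.Icc 1 m).image (fun i : ℕ => (i : ZMod N))

/-- `∂Y`: the set of `j ∈ ℤ/Nℤ` such that exactly one of `j`, `j+1` lies in `Y`. -/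
def pbdry (N : ℕ) [NeZero N] (Y : Finset (ZMod N)) : Finset (ZMod N) :=
  Finset.univ.filter fun j => (j ∈ Y ∧ j + 1 ∉ Y) ∨ (j ∉ Y ∧ j + 1 ∈ Y)

/-- `n(X) = |∂(X Δ M)|`. -/
def nX (N m : ℕ) [NeZero N] (X : Finset (ZMod N)) : ℕ := (pbdry N (X ∆ Mset N m)).card

/-- The translate `Y + s = {i + s : i ∈ Y}`. -/
def tr (N : ℕ) (Y : Finset (ZMod N)) (s : ZMod N) : Finset (ZMod N) := Y.image (· + s)

/-- Extend a family of coefficients by setting `e(∅) := 1` and `e(M Δ (M+s)) := 0`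
for `s ≠ 0`. -/
def pext (N m : ℕ) [NeZero N] (e : Finset (ZMod N) → ℝ) : Finset (ZMod N) → ℝ :=
  fun X =>
    if X = ∅ then 1
    else if ∃ s : ZMod N, X = Mset N m ∆ tr N (Mset N m) s then 0
    else e X

/-- The sets `X` with `X:m` (i.e. `|X Δ M| = m`) and `n(X) > 2`. -/
def psector (N m : ℕ) [NeZero N] : Finset (Finset (ZMod N)) :=
  Finset.univ.filter fun X => (X ∆ Mset N m).card = m ∧ 2 < nX N m X

/-- The droplet fixed-point map `F(e_s, e(X)) = (e′_s, e′(X))`, where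
`e′_s = 2ε·Σ_{j ∈ ∂(M−s)} e(M Δ (M−s) Δ {j,j+1})` and, for `X` with `X:m` and `n(X) > 2`,
`e′(X) = −(ε/(n(X)−2))·Σ_{j ∈ ∂(X Δ M)} e(X Δ {j,j+1})
  + (1/(2(n(X)−2)))·Σ_{s} e_s·e((X+s) Δ (M+s) Δ M)`
(with the conventions `e(∅) = 1`, `e(M Δ (M+s)) = 0` for `s ≠ 0`);
all other components are set to `0`. -/
noncomputable def dropF (N m : ℕ) [NeZero N] (ε : ℝ)
    (p : (ZMod N → ℝ) × (Finset (ZMod N) → ℝ)) :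
    (ZMod N → ℝ) × (Finset (ZMod N) → ℝ) :=
  (fun s => 2 * ε * ∑ j ∈ pbdry N (tr N (Mset N m) (-s)),
      pext N m p.2 (Mset N m ∆ tr N (Mset N m) (-s) ∆ {j, j + 1}),
    fun X =>
      if (X ∆ Mset N m).card = m ∧ 2 < nX N m X then
        -(ε / ((nX N m X : ℝ) - 2)) *
            ∑ j ∈ pbdry N (X ∆ Mset N m), pext N m p.2 (X ∆ {j, j + 1})
          + (1 / (2 * ((nX N m X : ℝ) - 2))) *
              ∑ s : ZMod N, p.1 s * pext N m p.2 (tr N X s ∆ tr N (Mset N m) s ∆ Mset N m)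
      else 0)

/-- The norm `‖e‖ = Σ_s |e_s| + 2·Σ_{X:m, n(X)>2} (n(X)−2)·|e(X)|`. -/
def pnorm (N m : ℕ) [NeZero N] (p : (ZMod N → ℝ) × (Finset (ZMod N) → ℝ)) : ℝ :=
  ∑ s : ZMod N, |p.1 s|
    + 2 * ∑ X ∈ psector N m, ((nX N m X : ℝ) - 2) * |p.2 X|


/-! At `e = 0` only the convention `e(∅) = 1` survives in `F`, so each component of `F(0)` counts
the pairs `{j, j+1}` equal to a prescribed set. The boundary `∂` is additive for `Δ` and commutes
with translations, `∂M = {0, m}` and `∂{c, c+1} = {c-1, c+1}`. A pair `X = {c, c+1}` satisfies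
`X:m` exactly when `c ∈ ∂M`, and then `∂(X Δ M) = {c-1, c+1} ∪ {0, m}` has four points, whence
`e′(X) = -ε/2`. The same count shows that `M Δ (M+t)` is never a pair: `M + t = X Δ M` would have
four boundary points, while every translate of `M` has two. -/

theorem Finset.card_pair_symmDiff_eq_card_iff {α : Type*} [DecidableEq α] {a b : α} (hab : a ≠ b)
    (s : Finset α) :
    (({a, b} : Finset α) ∆ s).card = s.card ↔ (a ∈ s ∧ b ∉ s) ∨ (a ∉ s ∧ b ∈ s) := by
  have h₁ := card_sdiff_add_card_inter ({a, b} : Finset α) s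
  have h₂ := card_sdiff_add_card_inter s ({a, b} : Finset α)
  rw [card_pair hab] at h₁
  rw [inter_comm] at h₂
  rw [symmDiff_def, sup_eq_union, card_union_of_disjoint disjoint_sdiff_sdiff]
  by_cases ha : a ∈ s <;> by_cases hb : b ∈ s <;>
    simp only [insert_inter_of_mem, insert_inter_of_notMem, singleton_inter_of_mem,
      singleton_inter_of_notMem, ha, hb, not_false_eq_true, insert_empty, card_pair hab,
      card_singleton, card_empty, not_true, and_true, and_false, or_false, false_or, iff_true,
      iff_false] at h₁ h₂ ⊢ <;>
    omega

theorem Finset.pair_add_one_inj {R : Type*} [CommRing R] [DecidableEq R] (h2 : (2 : R) ≠ 0)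
    {a b : R} : ({a, a + 1} : Finset R) = {b, b + 1} ↔ a = b := by
  refine ⟨fun h => ?_, fun h => h ▸ rfl⟩
  have ha : a ∈ ({b, b + 1} : Finset R) := h ▸ mem_insert_self a _
  have hb : b ∈ ({a, a + 1} : Finset R) := h.symm ▸ mem_insert_self b _
  simp only [mem_insert, mem_singleton] at ha hb
  grind

namespace ZMod

variable {N : ℕ}

theorem natCast_ne_zero_of_pos_of_lt {k : ℕ} (h0 : 0 < k) (hk : k < N) : (k : ZMod N) ≠ 0 := by
  rw [Ne, natCast_eq_zero_iff]
  exact Nat.not_dvd_of_pos_of_lt h0 hk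

theorem two_ne_zero_of_two_lt (hN : 2 < N) : (2 : ZMod N) ≠ 0 := by
  simpa using natCast_ne_zero_of_pos_of_lt (N := N) two_pos hN

theorem eq_natCast_iff_val_eq [NeZero N] {k : ℕ} (hk : k < N) (a : ZMod N) : a = k ↔ a.val = k := by
  rw [← val_cast_of_lt hk, (val_injective N).eq_iff, val_cast_of_lt hk]

theorem val_add_one_eq_ite [NeZero N] (a : ZMod N) :
    (a + 1).val = if a.val + 1 = N then 0 else a.val + 1 := by
  have ha := a.val_lt
  rw [val_add, val_one_eq_one_mod, Nat.add_mod_mod]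
  split_ifs with h
  · rw [h, Nat.mod_self]
  · exact Nat.mod_eq_of_lt (by omega)

end ZMod

section Translate

variable {N : ℕ}

@[simp]
theorem mem_tr {Y : Finset (ZMod N)} {s a : ZMod N} : a ∈ tr N Y s ↔ a - s ∈ Y := by
  simp [tr, sub_eq_add_neg]

theorem card_tr (Y : Finset (ZMod N)) (s : ZMod N) : (tr N Y s).card = Y.card :=
  card_image_of_injective _ (add_left_injective s)

end Translate

section Boundary

variable {N : ℕ} [NeZero N]

@[simp]
theorem mem_pbdry {Y : Finset (ZMod N)} {j : ZMod N} :
    j ∈ pbdry N Y ↔ (j ∈ Y ∧ j + 1 ∉ Y) ∨ (j ∉ Y ∧ j + 1 ∈ Y) := by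
  simp [pbdry]

theorem pbdry_symmDiff (Y Z : Finset (ZMod N)) : pbdry N (Y ∆ Z) = pbdry N Y ∆ pbdry N Z := by
  ext j
  simp only [mem_pbdry, mem_symmDiff]
  tauto

theorem pbdry_tr (Y : Finset (ZMod N)) (s : ZMod N) :
    pbdry N (tr N Y s) = tr N (pbdry N Y) s := by
  ext j
  simp [sub_add_eq_add_sub]

theorem pbdry_pair (h2 : (2 : ZMod N) ≠ 0) (c : ZMod N) :
    pbdry N {c, c + 1} = {c - 1, c + 1} := by
  ext j
  simp only [mem_pbdry, mem_insert, mem_singleton]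
  grind

theorem mem_pbdry_pair_symmDiff {Y : Finset (ZMod N)} {c : ZMod N} (hc : c ∈ pbdry N Y) :
    c ∈ pbdry N ({c, c + 1} ∆ Y) := by
  rw [pbdry_symmDiff, mem_symmDiff]
  exact Or.inr ⟨hc, by simp⟩

end Boundary

section Interval

variable {N m : ℕ}

theorem card_Mset (hmN : m < N) : (Mset N m).card = m := by
  rw [Mset, card_image_of_injOn, Nat.card_Icc, Nat.add_sub_cancel]
  intro i hi j hj hij
  simp only [coe_Icc, Set.mem_Icc] at hi hj
  rwa [ZMod.natCast_eq_natCast_iff', Nat.mod_eq_of_lt (by omega),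
    Nat.mod_eq_of_lt (by omega)] at hij

variable [NeZero N]

theorem mem_Mset (hmN : m < N) {a : ZMod N} : a ∈ Mset N m ↔ 1 ≤ a.val ∧ a.val ≤ m := by
  simp only [Mset, mem_image, mem_Icc]
  constructor
  · rintro ⟨i, hi, rfl⟩
    rwa [ZMod.val_cast_of_lt (by omega)]
  · exact fun h => ⟨a.val, h, ZMod.natCast_zmod_val a⟩

theorem pbdry_Mset (hm : 1 ≤ m) (hmN : m < N) : pbdry N (Mset N m) = {0, (m : ZMod N)} := by
  ext j
  have hj := j.val_lt
  simp only [mem_pbdry, mem_Mset hmN, ZMod.val_add_one_eq_ite, mem_insert, mem_singleton,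
    ZMod.eq_natCast_iff_val_eq hmN, ← ZMod.val_eq_zero]
  split_ifs <;> omega

theorem card_pair_symmDiff_Mset_eq_iff (hm : 1 ≤ m) (hmN : m < N) (j : ZMod N) :
    (({j, j + 1} : Finset (ZMod N)) ∆ Mset N m).card = m ↔ j ∈ pbdry N (Mset N m) := by
  have h1 : (1 : ZMod N) ≠ 0 := by
    simpa using ZMod.natCast_ne_zero_of_pos_of_lt (N := N) one_pos (by omega)
  have h := card_pair_symmDiff_eq_card_iff (by simpa using h1 : j ≠ j + 1) (Mset N m)
  rwa [card_Mset hmN, ← mem_pbdry] at h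

end Interval

section Droplet

variable {N m : ℕ} [NeZero N] (hm : 2 ≤ m) (hmN : m + 2 ≤ N)
include hm hmN

theorem disjoint_pbdry_pair_pbdry_Mset {c : ZMod N} (hc : c ∈ pbdry N (Mset N m)) :
    Disjoint ({c - 1, c + 1} : Finset (ZMod N)) {0, (m : ZMod N)} := by
  have hne : ∀ k : ℕ, 0 < k → k < N → (k : ZMod N) ≠ 0 :=
    fun k => ZMod.natCast_ne_zero_of_pos_of_lt
  have h1 := hne 1 one_pos (by omega)
  have hm1 := hne (m + 1) (by omega) (by omega)
  have hm2 := hne (m - 1) (by omega) (by omega)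
  rw [pbdry_Mset (by omega) (by omega), mem_insert, mem_singleton] at hc
  push_cast [Nat.cast_sub (by omega : 1 ≤ m)] at h1 hm1 hm2
  simp only [disjoint_insert_left, disjoint_insert_right, disjoint_singleton_left, mem_insert,
    mem_singleton]
  grind

theorem nX_pair {c : ZMod N} (hc : c ∈ pbdry N (Mset N m)) : nX N m {c, c + 1} = 4 := by
  have h2 := ZMod.two_ne_zero_of_two_lt (N := N) (by omega)
  have hcc : c - 1 ≠ c + 1 := fun h => h2 (by linear_combination -h)
  have h0m : (0 : ZMod N) ≠ m := (ZMod.natCast_ne_zero_of_pos_of_lt (by omega) (by omega)).symm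
  have hdisj := disjoint_pbdry_pair_pbdry_Mset hm hmN hc
  rw [nX, pbdry_symmDiff, pbdry_pair h2, pbdry_Mset (by omega) (by omega), hdisj.symmDiff_eq_sup,
    sup_eq_union, card_union_of_disjoint hdisj, card_pair hcc, card_pair h0m]

theorem symmDiff_tr_Mset_ne_pair (t j : ZMod N) : Mset N m ∆ tr N (Mset N m) t ≠ {j, j + 1} := by
  intro h
  have htr : tr N (Mset N m) t = {j, j + 1} ∆ Mset N m := by
    rw [← h, symmDiff_comm, symmDiff_symmDiff_cancel_left]
  have hj : j ∈ pbdry N (Mset N m) := by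
    rw [← card_pair_symmDiff_Mset_eq_iff (by omega) (by omega), ← htr, card_tr,
      card_Mset (by omega)]
  have h4 := nX_pair hm hmN hj
  rw [nX, ← htr, pbdry_tr, card_tr, pbdry_Mset (by omega) (by omega),
    card_pair (ZMod.natCast_ne_zero_of_pos_of_lt (by omega) (by omega)).symm] at h4
  omega

end Droplet

section FixedPointMap

variable {N m : ℕ} [NeZero N]

theorem pext_zero (X : Finset (ZMod N)) : pext N m 0 X = if X = ∅ then 1 else 0 := by
  unfold pext
  split_ifs <;> rfl

variable (ε : ℝ) (hm : 2 ≤ m) (hmN : m + 2 ≤ N)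
include hm hmN

theorem dropF_zero_fst (s : ZMod N) : (dropF N m ε 0).1 s = 0 := by
  refine mul_eq_zero_of_right _ (sum_eq_zero fun j _ => ?_)
  rw [Prod.snd_zero, pext_zero, if_neg]
  rw [← bot_eq_empty, symmDiff_eq_bot]
  exact symmDiff_tr_Mset_ne_pair hm hmN (-s) j

theorem dropF_zero_snd_pair {c : ZMod N} (hc : c ∈ pbdry N (Mset N m)) :
    (dropF N m ε 0).2 {c, c + 1} = -ε / 2 := by
  have hsum :
      ∑ j ∈ pbdry N ({c, c + 1} ∆ Mset N m), pext N m 0 ({c, c + 1} ∆ {j, j + 1}) = 1 := by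
    simp only [pext_zero, ← bot_eq_empty, symmDiff_eq_bot,
      pair_add_one_inj (ZMod.two_ne_zero_of_two_lt (N := N) (by omega))]
    rw [sum_ite_eq, if_pos (mem_pbdry_pair_symmDiff hc)]
  have hcard := (card_pair_symmDiff_Mset_eq_iff (by omega) (by omega) c).mpr hc
  simp only [dropF, Prod.fst_zero, Prod.snd_zero, Pi.zero_apply, zero_mul, sum_const_zero,
    mul_zero, add_zero, nX_pair hm hmN hc, hcard, hsum]
  norm_num
  ring

theorem dropF_zero_snd_of_ne_pair {X : Finset (ZMod N)}
    (hX : ∀ c ∈ pbdry N (Mset N m), X ≠ {c, c + 1}) : (dropF N m ε 0).2 X = 0 := by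
  simp only [dropF, Prod.fst_zero, Prod.snd_zero, Pi.zero_apply, zero_mul, sum_const_zero,
    mul_zero, add_zero]
  split_ifs with hsec
  · refine mul_eq_zero_of_right _ (sum_eq_zero fun j _ => ?_)
    rw [pext_zero, if_neg]
    rw [← bot_eq_empty, symmDiff_eq_bot]
    rintro rfl
    exact hX j ((card_pair_symmDiff_Mset_eq_iff (by omega) (by omega) j).mp hsec.1) rfl
  · rfl

theorem pnorm_dropF_zero : pnorm N m (dropF N m ε 0) = 4 * |ε| := by
  set pair : ZMod N → Finset (ZMod N) := fun c => {c, c + 1}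
  have hpair : Set.InjOn pair (pbdry N (Mset N m)) := fun _ _ _ _ h =>
    (pair_add_one_inj (ZMod.two_ne_zero_of_two_lt (N := N) (by omega))).mp h
  have hsub : (pbdry N (Mset N m)).image pair ⊆ psector N m := by
    intro X hX
    obtain ⟨c, hc, rfl⟩ := mem_image.mp hX
    simp only [psector, mem_filter, mem_univ, true_and, pair, nX_pair hm hmN hc,
      (card_pair_symmDiff_Mset_eq_iff (by omega) (by omega) c).mpr hc]
    omega
  have hcard : (pbdry N (Mset N m)).card = 2 := by
    rw [pbdry_Mset (by omega) (by omega),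
      card_pair (ZMod.natCast_ne_zero_of_pos_of_lt (by omega) (by omega)).symm]
  rw [pnorm, sum_eq_zero fun s _ => by rw [dropF_zero_fst ε hm hmN, abs_zero],
    ← sum_subset hsub fun X _ hX => ?_, sum_image hpair]
  · rw [sum_congr rfl fun c hc => by rw [nX_pair hm hmN hc, dropF_zero_snd_pair ε hm hmN hc],
      sum_const, hcard]
    simp only [abs_div, abs_neg, abs_two]
    ring
  · rw [dropF_zero_snd_of_ne_pair ε hm hmN fun c hc h => hX (mem_image.mpr ⟨c, hc, h.symm⟩),
      abs_zero, mul_zero]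

end FixedPointMap

theorem dropF_zero_general (N : ℕ) [NeZero N] (m : ℕ) (ε : ℝ)
    (hm : 2 ≤ m) (hmN : m + 2 ≤ N) :
    (∀ s : ZMod N, (dropF N m ε 0).1 s = 0) ∧
      (dropF N m ε 0).2 {(m : ZMod N), (m : ZMod N) + 1} = -ε / 2 ∧
      (dropF N m ε 0).2 {(0 : ZMod N), 1} = -ε / 2 ∧
      (∀ X : Finset (ZMod N),
        X ≠ {(m : ZMod N), (m : ZMod N) + 1} → X ≠ {(0 : ZMod N), 1} →
          (dropF N m ε 0).2 X = 0) ∧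
      pnorm N m (dropF N m ε 0) = 4 * |ε| := by
  have hbdry : pbdry N (Mset N m) = {0, (m : ZMod N)} := pbdry_Mset (by omega) (by omega)
  have h01 : ({(0 : ZMod N), 1} : Finset (ZMod N)) = {0, 0 + 1} := by rw [zero_add]
  refine ⟨dropF_zero_fst ε hm hmN, dropF_zero_snd_pair ε hm hmN (by simp [hbdry]), ?_,
    fun X hXm hX0 => dropF_zero_snd_of_ne_pair ε hm hmN fun c hc => ?_, pnorm_dropF_zero ε hm hmN⟩
  · rw [h01]
    exact dropF_zero_snd_pair ε hm hmN (by simp [hbdry])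
  · rcases (by simpa [hbdry] using hc : c = 0 ∨ c = m) with rfl | rfl
    · rwa [← h01]
    · exact hXm

theorem dropF_zero (N : ℕ) [NeZero N] (m : ℕ) (ε : ℝ)
    (hN : 4 ≤ N) (hm : 2 ≤ m) (hmN : m + 2 ≤ N) :
    (∀ s : ZMod N, (dropF N m ε 0).1 s = 0) ∧
      (dropF N m ε 0).2 {(m : ZMod N), (m : ZMod N) + 1} = -ε / 2 ∧
      (dropF N m ε 0).2 {(0 : ZMod N), 1} = -ε / 2 ∧
      (∀ X : Finset (ZMod N),
        X ≠ {(m : ZMod N), (m : ZMod N) + 1} → X ≠ {(0 : ZMod N), 1} →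
          (dropF N m ε 0).2 X = 0) ∧
      pnorm N m (dropF N m ε 0) = 4 * |ε| :=
  dropF_zero_general N m ε hm hmN
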